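/- arXiv:1007.2811 — 2 statements merged into one kernel-verified Lean document; each statement's English description precedes it below -/
import Mathlib

section
/- Let B be an exact Krull–Schmidt Frobenius k-category whose stable category B̄ has finite-dimensional Hom-spaces, and let C be a functorially finite maximal (d−1)-orthogonal subcategory of B for some d ≥ 1. Then the following are equivalent: (1) B̄(C,C[i]) = 0 for all i with −d < i ≤ −1 (i.e., the stable Hom from any object of C to any i-th cosyzygy shift of an object of C vanishes in this range); (2) C̄[d] = C̄, that is, the d-th syzygy Ω^d C lies in C (up to projective summands) for every C in C. -/
open CategoryTheory CategoryTheory.Limits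

universe v u

/-- Bundled data of an exact Krull–Schmidt Frobenius `k`-category: an additive
`k`-linear category equipped with a class of admissible short exact sequences,
a class of projective(-injective) objects satisfying the usual lifting
properties on both sides (the Frobenius property), chosen projective covers
with syzygies and injective envelopes with cosyzygies (enough projectives and
enough injectives), the Krull--Schmidt property, and Hom-finiteness of the
stable category (Hom's modulo maps factoring through projectives). -/
structure FrobeniusSetup (k : Type) [Field k] (B : Type u) [Category.{v} B] [Preadditive B]
    [CategoryTheory.Linear k B] [HasFiniteBiproducts B] [HasBinaryBiproducts B] : Type (max u v) where
  /-- the admissible short exact sequences `0 → X → Y → Z → 0` of the exact structure -/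
  IsSES : ∀ {X Y Z : B}, (X ⟶ Y) → (Y ⟶ Z) → Prop
  /-- the projective (equivalently injective) objects -/
  Proj : B → Prop
  ses_zero : ∀ {X Y Z : B} (f : X ⟶ Y) (g : Y ⟶ Z), IsSES f g → f ≫ g = 0
  /-- in an admissible short exact sequence, `f` is a kernel of `g` -/
  ses_ker : ∀ {X Y Z : B} (f : X ⟶ Y) (g : Y ⟶ Z), IsSES f g →
      ∀ {W : B} (u : W ⟶ Y), u ≫ g = 0 → ∃! v : W ⟶ X, v ≫ f = u
  /-- in an admissible short exact sequence, `g` is a cokernel of `f` -/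
  ses_coker : ∀ {X Y Z : B} (f : X ⟶ Y) (g : Y ⟶ Z), IsSES f g →
      ∀ {W : B} (u : Y ⟶ W), f ≫ u = 0 → ∃! v : Z ⟶ W, g ≫ v = u
  /-- admissible short exact sequences are closed under isomorphism -/
  ses_iso : ∀ {X Y Z X' Y' Z' : B} (f : X ⟶ Y) (g : Y ⟶ Z)
      (iX : X ≅ X') (iY : Y ≅ Y') (iZ : Z ≅ Z') (f' : X' ⟶ Y') (g' : Y' ⟶ Z'),
      IsSES f g → f ≫ iY.hom = iX.hom ≫ f' → g ≫ iZ.hom = iY.hom ≫ g' → IsSES f' g'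
  /-- split exact sequences are admissible -/
  ses_split : ∀ X Y : B, IsSES (biprod.inl : X ⟶ X ⊞ Y) (biprod.snd : X ⊞ Y ⟶ Y)
  /-- the `Proj` objects are precisely the projective objects of the exact structure -/
  proj_iff : ∀ P : B, Proj P ↔
      (∀ {X Y Z : B} (f : X ⟶ Y) (g : Y ⟶ Z), IsSES f g →
        ∀ h : P ⟶ Z, ∃ l : P ⟶ Y, l ≫ g = h)
  /-- the Frobenius property: `Proj` objects are precisely the injective objects -/
  inj_iff : ∀ P : B, Proj P ↔
      (∀ {X Y Z : B} (f : X ⟶ Y) (g : Y ⟶ Z), IsSES f g →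
        ∀ h : X ⟶ P, ∃ l : Y ⟶ P, f ≫ l = h)
  /-- a chosen projective cover (enough projectives) -/
  P : B → B
  projP : ∀ X : B, Proj (P X)
  pr : ∀ X : B, P X ⟶ X
  /-- the chosen syzygy -/
  syz : B → B
  syzMono : ∀ X : B, syz X ⟶ P X
  ses_syz : ∀ X : B, IsSES (syzMono X) (pr X)
  /-- a chosen injective envelope (enough injectives) -/
  I : B → B
  projI : ∀ X : B, Proj (I X)
  en : ∀ X : B, X ⟶ I X
  /-- the chosen cosyzygy, i.e. the suspension of the stable category -/
  cosyz : B → B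
  cosyzEpi : ∀ X : B, I X ⟶ cosyz X
  ses_cosyz : ∀ X : B, IsSES (en X) (cosyzEpi X)
  /-- the Krull–Schmidt property: every object is a finite biproduct of objects
  with local endomorphism rings -/
  krullSchmidt : ∀ X : B, ∃ (n : ℕ) (Y : Fin n → B),
      (∀ i, IsLocalRing (End (Y i))) ∧ Nonempty (X ≅ ⨁ Y)
  /-- Hom-finiteness of the stable category -/
  homFinite : ∀ X Y : B, FiniteDimensional k
      ((X ⟶ Y) ⧸ Submodule.span k
        {f : X ⟶ Y | ∃ (Q : B) (g : X ⟶ Q) (h : Q ⟶ Y), Proj Q ∧ f = g ≫ h})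

namespace FrobeniusSetup

variable {k : Type} [Field k] {B : Type u} [Category.{v} B] [Preadditive B]
  [CategoryTheory.Linear k B] [HasFiniteBiproducts B] [HasBinaryBiproducts B] (S : FrobeniusSetup k B)

/-- The ideal of maps factoring through a projective object. -/
def projIdeal (X Y : B) : Submodule k (X ⟶ Y) :=
  Submodule.span k {f : X ⟶ Y | ∃ (Q : B) (g : X ⟶ Q) (h : Q ⟶ Y), S.Proj Q ∧ f = g ≫ h}

/-- Stable Hom: morphisms in the stable category `B̄`. -/
def sHom (X Y : B) : Type v := (X ⟶ Y) ⧸ S.projIdeal X Y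

noncomputable instance (X Y : B) : AddCommGroup (S.sHom X Y) :=
  inferInstanceAs (AddCommGroup ((X ⟶ Y) ⧸ S.projIdeal X Y))

noncomputable instance (X Y : B) : Module k (S.sHom X Y) :=
  inferInstanceAs (Module k ((X ⟶ Y) ⧸ S.projIdeal X Y))

/-- The class of a morphism in the stable category. -/
def sMk {X Y : B} (f : X ⟶ Y) : S.sHom X Y := Submodule.Quotient.mk f

/-- Vanishing of the stable Hom-space `B̄(X,Y)`. -/
def sVanish (X Y : B) : Prop := S.projIdeal X Y = ⊤

/-- `X` and `Y` are isomorphic in the stable category `B̄`. -/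
def StIso (X Y : B) : Prop :=
  ∃ (f : X ⟶ Y) (g : Y ⟶ X),
    f ≫ g - 𝟙 X ∈ S.projIdeal X X ∧ g ≫ f - 𝟙 Y ∈ S.projIdeal Y Y

/-- The shift (suspension) `X[n]` in the stable category: iterated cosyzygies for
`n ≥ 0` and iterated syzygies for `n < 0`. -/
def shift : ℤ → B → B
  | Int.ofNat n, X => S.cosyz^[n] X
  | Int.negSucc n, X => S.syz^[n + 1] X

/-- `Ext^i_B(X,Y) = 0`, expressed via the standard identification
`Ext^i(X,Y) ≅ B̄(Ω^i X, Y)` for `i ≥ 1` valid in a Frobenius category. -/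
def extVanish (i : ℕ) (X Y : B) : Prop := S.sVanish (S.syz^[i] X) Y

/-- `C` is a maximal `(d-1)`-orthogonal subcategory of `B`. -/
def MaxOrthogonal (C : Set B) (d : ℕ) : Prop :=
  (∀ X : B, X ∈ C ↔ ∀ i : ℕ, 1 ≤ i → i < d → ∀ C₀ ∈ C, S.extVanish i X C₀) ∧
  (∀ Y : B, Y ∈ C ↔ ∀ i : ℕ, 1 ≤ i → i < d → ∀ C₀ ∈ C, S.extVanish i C₀ Y)

/-- `C` is functorially finite in `B`: every object admits a right and a left
`C`-approximation. -/
def FunctoriallyFinite (_S : FrobeniusSetup k B) (C : Set B) : Prop :=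
  (∀ X : B, ∃ C₀ ∈ C, ∃ f : C₀ ⟶ X, ∀ C₁ ∈ C, ∀ g : C₁ ⟶ X, ∃ h : C₁ ⟶ C₀, h ≫ f = g) ∧
  (∀ X : B, ∃ C₀ ∈ C, ∃ f : X ⟶ C₀, ∀ C₁ ∈ C, ∀ g : X ⟶ C₁, ∃ h : C₀ ⟶ C₁, f ≫ h = g)

/-- The subcategory `E_j = {X | B̄(C, X[i]) = 0 for 1 ≤ i ≤ d-1, i ≠ j}`. -/
def Esub (C : Set B) (d j : ℕ) : Set B :=
  {X : B | ∀ i : ℕ, 1 ≤ i → i ≤ d - 1 → i ≠ j → ∀ C₀ ∈ C, S.sVanish C₀ (S.cosyz^[i] X)}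

/-- `C̄[d] = C̄`: the `d`-th syzygy of every object of `C` again lies in `C`,
up to stable isomorphism (i.e. up to projective summands). -/
def ShiftStable (C : Set B) (d : ℕ) : Prop :=
  ∀ C₀ ∈ C, ∃ C₁ ∈ C, S.StIso (S.syz^[d] C₀) C₁

end FrobeniusSetup

section Aux
open FrobeniusSetup
variable {k : Type} [Field k] {B : Type u} [Category.{v} B] [Preadditive B]
  [CategoryTheory.Linear k B] [HasFiniteBiproducts B] [HasBinaryBiproducts B]
  (S : FrobeniusSetup k B)

lemma aux_proj_biprod {Q₁ Q₂ : B} (h₁ : S.Proj Q₁) (h₂ : S.Proj Q₂) : S.Proj (Q₁ ⊞ Q₂) := by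
  rw [S.proj_iff]
  intro X Y Z f g hses h
  obtain ⟨l₁, hl₁⟩ := (S.proj_iff Q₁).1 h₁ f g hses (biprod.inl ≫ h)
  obtain ⟨l₂, hl₂⟩ := (S.proj_iff Q₂).1 h₂ f g hses (biprod.inr ≫ h)
  refine ⟨biprod.fst ≫ l₁ + biprod.snd ≫ l₂, ?_⟩
  rw [Preadditive.add_comp, Category.assoc, Category.assoc, hl₁, hl₂,
    ← Category.assoc, ← Category.assoc, ← Preadditive.add_comp, biprod.total, Category.id_comp]

lemma aux_mem_projIdeal {X Y : B} (f : X ⟶ Y) :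
    f ∈ S.projIdeal X Y ↔ ∃ (Q : B) (g : X ⟶ Q) (h : Q ⟶ Y), S.Proj Q ∧ f = g ≫ h := by
  constructor
  · intro hf
    induction hf using Submodule.span_induction with
    | mem x hx => exact hx
    | zero => exact ⟨S.P X, 0, 0, S.projP X, by simp⟩
    | add a b _ _ ha hb =>
      obtain ⟨Q, g, h, hQ, rfl⟩ := ha
      obtain ⟨Q', g', h', hQ', rfl⟩ := hb
      exact ⟨Q ⊞ Q', biprod.lift g g', biprod.desc h h', aux_proj_biprod S hQ hQ', by simp⟩
    | smul c a _ ha =>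
      obtain ⟨Q, g, h, hQ, rfl⟩ := ha
      exact ⟨Q, c • g, h, hQ, by rw [Linear.smul_comp]⟩
  · intro hf; exact Submodule.subset_span hf

lemma aux_sVanish_iff {X Y : B} :
    S.sVanish X Y ↔ ∀ f : X ⟶ Y, ∃ (Q : B) (g : X ⟶ Q) (h : Q ⟶ Y), S.Proj Q ∧ f = g ≫ h := by
  unfold FrobeniusSetup.sVanish
  rw [Submodule.eq_top_iff']
  exact forall_congr' fun f => aux_mem_projIdeal S f

lemma aux_precomp {X Y Z : B} {p : Y ⟶ Z} (hp : p ∈ S.projIdeal Y Z) (f : X ⟶ Y) :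
    f ≫ p ∈ S.projIdeal X Z := by
  rw [aux_mem_projIdeal] at hp ⊢
  obtain ⟨Q, g, h, hQ, rfl⟩ := hp
  exact ⟨Q, f ≫ g, h, hQ, by simp⟩

lemma aux_postcomp {X Y Z : B} {p : X ⟶ Y} (hp : p ∈ S.projIdeal X Y) (f : Y ⟶ Z) :
    p ≫ f ∈ S.projIdeal X Z := by
  rw [aux_mem_projIdeal] at hp ⊢
  obtain ⟨Q, g, h, hQ, rfl⟩ := hp
  exact ⟨Q, g, h ≫ f, hQ, by simp⟩

/-- Lemma A: the syzygy functor preserves vanishing of stable Hom. -/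
lemma aux_syz_vanish {X Y : B} (h : S.sVanish X Y) : S.sVanish (S.syz X) (S.syz Y) := by
  rw [aux_sVanish_iff] at h ⊢
  intro g
  obtain ⟨t, ht⟩ := (S.inj_iff (S.P Y)).1 (S.projP Y) (S.syzMono X) (S.pr X) (S.ses_syz X)
      (g ≫ S.syzMono Y)
  have h0 : S.syzMono X ≫ (t ≫ S.pr Y) = 0 := by
    rw [← Category.assoc, ht, Category.assoc, S.ses_zero _ _ (S.ses_syz Y), comp_zero]
  obtain ⟨f, hf, -⟩ := S.ses_coker _ _ (S.ses_syz X) (t ≫ S.pr Y) h0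
  obtain ⟨Q, a, b, hQ, rfl⟩ := h f
  obtain ⟨b', hb'⟩ := (S.proj_iff Q).1 hQ _ _ (S.ses_syz Y) b
  have hs : (t - S.pr X ≫ a ≫ b') ≫ S.pr Y = 0 := by
    rw [Preadditive.sub_comp, Category.assoc, Category.assoc, hb', hf, sub_self]
  obtain ⟨u, hu, -⟩ := S.ses_ker _ _ (S.ses_syz Y) (t - S.pr X ≫ a ≫ b') hs
  have key : (S.syzMono X ≫ u) ≫ S.syzMono Y = g ≫ S.syzMono Y := by
    rw [Category.assoc, hu, Preadditive.comp_sub, ht, ← Category.assoc,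
      S.ses_zero _ _ (S.ses_syz X), zero_comp, sub_zero]
  have hz : (g ≫ S.syzMono Y) ≫ S.pr Y = 0 := by
    rw [Category.assoc, S.ses_zero _ _ (S.ses_syz Y), comp_zero]
  obtain ⟨v, -, hv⟩ := S.ses_ker _ _ (S.ses_syz Y) (g ≫ S.syzMono Y) hz
  have e1 := hv _ key
  have e2 := hv g rfl
  exact ⟨S.P X, S.syzMono X, u, S.projP X, by rw [e2, ← e1]⟩

/-- Lemma B: the syzygy functor reflects vanishing of stable Hom. -/
lemma aux_syz_vanish_rev {X Y : B} (h : S.sVanish (S.syz X) (S.syz Y)) : S.sVanish X Y := by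
  rw [aux_sVanish_iff] at h ⊢
  intro f
  obtain ⟨t, ht⟩ := (S.proj_iff (S.P X)).1 (S.projP X) _ _ (S.ses_syz Y) (S.pr X ≫ f)
  have h0 : (S.syzMono X ≫ t) ≫ S.pr Y = 0 := by
    rw [Category.assoc, ht, ← Category.assoc, S.ses_zero _ _ (S.ses_syz X), zero_comp]
  obtain ⟨g, hg, -⟩ := S.ses_ker _ _ (S.ses_syz Y) (S.syzMono X ≫ t) h0
  obtain ⟨Q, a, b, hQ, hab⟩ := h g
  obtain ⟨a', ha'⟩ := (S.inj_iff Q).1 hQ _ _ (S.ses_syz X) a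
  have hz : S.syzMono X ≫ (t - a' ≫ b ≫ S.syzMono Y) = 0 := by
    rw [Preadditive.comp_sub, ← Category.assoc, ha', ← Category.assoc, ← hab, hg, sub_self]
  obtain ⟨w, hw, -⟩ := S.ses_coker _ _ (S.ses_syz X) (t - a' ≫ b ≫ S.syzMono Y) hz
  have key : S.pr X ≫ (w ≫ S.pr Y) = S.pr X ≫ f := by
    rw [← Category.assoc, hw, Preadditive.sub_comp, ht, Category.assoc, Category.assoc,
      S.ses_zero _ _ (S.ses_syz Y), comp_zero, comp_zero, sub_zero]
  have hz2 : S.syzMono X ≫ (S.pr X ≫ f) = 0 := by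
    rw [← Category.assoc, S.ses_zero _ _ (S.ses_syz X), zero_comp]
  obtain ⟨v, -, hv⟩ := S.ses_coker _ _ (S.ses_syz X) (S.pr X ≫ f) hz2
  have e1 := hv _ key
  have e2 := hv f rfl
  exact ⟨S.P Y, w, S.pr Y, S.projP Y, by rw [e2, ← e1]⟩

lemma aux_syz_iter {X Y : B} (n : ℕ) (h : S.sVanish X Y) :
    S.sVanish (S.syz^[n] X) (S.syz^[n] Y) := by
  induction n with
  | zero => exact h
  | succ n ih =>
    rw [Function.iterate_succ_apply', Function.iterate_succ_apply']
    exact aux_syz_vanish S ih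

lemma aux_syz_iter_rev {X Y : B} (n : ℕ) (h : S.sVanish (S.syz^[n] X) (S.syz^[n] Y)) :
    S.sVanish X Y := by
  induction n with
  | zero => exact h
  | succ n ih =>
    rw [Function.iterate_succ_apply', Function.iterate_succ_apply'] at h
    exact ih (aux_syz_vanish_rev S h)

lemma aux_stiso_vanish {X Y Y' : B} (hi : S.StIso Y Y') (h : S.sVanish X Y') :
    S.sVanish X Y := by
  obtain ⟨u, v, huv, -⟩ := hi
  rw [FrobeniusSetup.sVanish, Submodule.eq_top_iff'] at h ⊢
  intro f
  have h1 : (f ≫ u) ≫ v ∈ S.projIdeal X Y := aux_postcomp S (h (f ≫ u)) v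
  have h2 : f ≫ (u ≫ v - 𝟙 Y) ∈ S.projIdeal X Y := aux_precomp S huv f
  have he : f = (f ≫ u) ≫ v - f ≫ (u ≫ v - 𝟙 Y) := by
    simp [Preadditive.comp_sub]
  rw [he]
  exact Submodule.sub_mem _ h1 h2

lemma aux_stiso_refl (X : B) : S.StIso X X :=
  ⟨𝟙 X, 𝟙 X, by rw [Category.id_comp, sub_self]; exact Submodule.zero_mem _,
    by rw [Category.id_comp, sub_self]; exact Submodule.zero_mem _⟩

end Aux

open FrobeniusSetup in
/-- Lemma 2.1.  Let `B` be an exact Krull–Schmidt Frobenius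
`k`-category whose stable category has finite-dimensional Hom-spaces, and let
`C` be a functorially finite maximal `(d-1)`-orthogonal subcategory of `B`,
`d ≥ 1`.  The following are equivalent:
(1) `B̄(C, C[i]) = 0` for all `-d < i ≤ -1`;
(2) `C̄[d] = C̄`, i.e. `Ω^d C₀` lies in `C` (up to projective summands, that is,
up to isomorphism in the stable category) for every `C₀ ∈ C`. -/
theorem stmt0_orthogonal_negative_shift_vanishing_iff_shift_stable
    {k : Type} [Field k] {B : Type u} [Category.{v} B] [Preadditive B]
    [CategoryTheory.Linear k B] [HasFiniteBiproducts B] [HasBinaryBiproducts B]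
    (S : FrobeniusSetup k B) (C : Set B) (d : ℕ) (hd : 1 ≤ d)
    (hff : S.FunctoriallyFinite C) (hmax : S.MaxOrthogonal C d) :
    (∀ C₁ ∈ C, ∀ C₂ ∈ C, ∀ i : ℤ, -(d : ℤ) < i → i ≤ -1 →
        S.sVanish C₁ (S.shift i C₂)) ↔
      S.ShiftStable C d := by
  constructor
  · -- (1) ⇒ (2)
    intro h1 C₀ hC₀
    refine ⟨S.syz^[d] C₀, ?_, aux_stiso_refl S _⟩
    rw [hmax.2 (S.syz^[d] C₀)]
    intro i hi1 hid C₂ hC₂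
    show S.sVanish (S.syz^[i] C₂) (S.syz^[d] C₀)
    have hv : S.sVanish C₂ (S.syz^[d - i] C₀) := by
      have h' := h1 C₂ hC₂ C₀ hC₀ (Int.negSucc (d - i - 1))
        (by rw [Int.negSucc_eq]; push_cast; omega)
        (by rw [Int.negSucc_eq]; push_cast; omega)
      have e : S.shift (Int.negSucc (d - i - 1)) C₀ = S.syz^[d - i] C₀ := by
        show S.syz^[(d - i - 1) + 1] C₀ = S.syz^[d - i] C₀
        congr 1
        omega
      rwa [e] at h'
    have h'' := aux_syz_iter S i hv
    have e2 : S.syz^[i] (S.syz^[d - i] C₀) = S.syz^[d] C₀ := by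
      rw [← Function.iterate_add_apply]
      congr 1
      omega
    rwa [e2] at h''
  · -- (2) ⇒ (1)
    intro h2 C₁ hC₁ C₂ hC₂ i hlow hhigh
    obtain ⟨C', hC', hiso⟩ := h2 C₂ hC₂
    cases i with
    | ofNat n =>
      exfalso
      have : (0 : ℤ) ≤ Int.ofNat n := Int.ofNat_nonneg n
      omega
    | negSucc n =>
      show S.sVanish C₁ (S.syz^[n + 1] C₂)
      have hjd : n + 1 < d := by
        rw [Int.negSucc_eq] at hlow
        push_cast at hlow
        omega
      have ho : S.sVanish (S.syz^[d - (n + 1)] C₁) C' :=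
        (hmax.1 C₁).1 hC₁ (d - (n + 1)) (by omega) (by omega) C' hC'
      have ht : S.sVanish (S.syz^[d - (n + 1)] C₁) (S.syz^[d] C₂) :=
        aux_stiso_vanish S hiso ho
      have e : S.syz^[d - (n + 1)] (S.syz^[n + 1] C₂) = S.syz^[d] C₂ := by
        rw [← Function.iterate_add_apply]
        congr 1
        omega
      refine aux_syz_iter_rev S (d - (n + 1)) ?_
      rwa [e]
end

section
/- Let B be an exact Krull–Schmidt Frobenius k-category whose stable category B̄ has finite-dimensional Hom-spaces, and let C be a functorially finite maximal (d−1)-orthogonal subcategory with d ≥ 2 and C̄[d] = C̄. Then for M ∈ mod-C̄ with M ≅ B̄(−,X) as in the presentation of Proposition 2.4(1), the induced sequence 0 → B̄(−,ΩX) → B̄(−,C₁) → B̄(−,C₀) → M → 0 is an exact sequence of functors on C̄, giving a projective presentation of M in mod-C̄. -/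
open CategoryTheory CategoryTheory.Limits

universe v u

namespace FrobeniusSetup

section FunctorCats

variable {k : Type} [Field k] {B : Type u} [Category.{v} B] [Preadditive B]
  [CategoryTheory.Linear k B] [HasFiniteBiproducts B] [HasBinaryBiproducts B]
  (S : FrobeniusSetup k B)

/-- Postcomposition on stable Hom's. -/
noncomputable def sComp (X : B) {Y Z : B} (w : Y ⟶ Z) : S.sHom X Y →ₗ[k] S.sHom X Z :=
  Submodule.mapQ _ _ (Linear.rightComp k X w) (by
    simp only [projIdeal, Submodule.span_le]
    rintro f ⟨Q, g, h, hQ, rfl⟩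
    exact Submodule.mem_comap.2 (Submodule.subset_span ⟨Q, g, h ≫ w, hQ, by simp⟩))

/-- Precomposition on stable Hom's. -/
noncomputable def sPre {W X : B} (u : W ⟶ X) (Y : B) : S.sHom X Y →ₗ[k] S.sHom W Y :=
  Submodule.mapQ _ _ (Linear.leftComp k Y u) (by
    simp only [projIdeal, Submodule.span_le]
    rintro f ⟨Q, g, h, hQ, rfl⟩
    exact Submodule.mem_comap.2 (Submodule.subset_span ⟨Q, u ≫ g, h, hQ, by simp⟩))

@[simp] lemma sComp_mk (X : B) {Y Z : B} (w : Y ⟶ Z) (f : X ⟶ Y) :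
    S.sComp X w (S.sMk f) = S.sMk (f ≫ w) := rfl

@[simp] lemma sPre_mk {W X : B} (u : W ⟶ X) (Y : B) (f : X ⟶ Y) :
    S.sPre u Y (S.sMk f) = S.sMk (u ≫ f) := rfl

variable (CC : Set B)

/-- The restriction to `C` of the representable functor `B(-,X)`; for `X ∈ C`
these are exactly the projective objects of `mod-C`. -/
def LinRep (X : B) : (ObjectProperty.FullSubcategory (· ∈ CC))ᵒᵖ ⥤ ModuleCat k :=
  (ObjectProperty.ι (· ∈ CC)).op ⋙ (linearYoneda k B).obj X

/-- The natural transformation `B(-,X) ⟶ B(-,Y)` induced by `w : X ⟶ Y`. -/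
def lMap {X Y : B} (w : X ⟶ Y) : LinRep (k := k) CC X ⟶ LinRep CC Y :=
  CategoryTheory.Functor.whiskerLeft (ObjectProperty.ι (· ∈ CC)).op
    ((linearYoneda k B).map w)

/-- The restriction to `C̄` of the stable representable functor `B̄(-,X)`. -/
noncomputable def SRep (X : B) : (ObjectProperty.FullSubcategory (· ∈ CC))ᵒᵖ ⥤ ModuleCat k where
  obj c := ModuleCat.of k (S.sHom c.unop.obj X)
  map {c c'} u := ModuleCat.ofHom (S.sPre (u.unop.hom : c'.unop.obj ⟶ c.unop.obj) X)
  map_id c := by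
    ext x
    obtain ⟨f, rfl⟩ := Submodule.Quotient.mk_surjective _ x
    show S.sMk ((𝟙 c.unop.obj : c.unop.obj ⟶ c.unop.obj) ≫ f) = S.sMk f
    rw [Category.id_comp]
  map_comp {c c' c''} u v := by
    ext x
    obtain ⟨f, rfl⟩ := Submodule.Quotient.mk_surjective _ x
    show S.sMk (((v.unop.hom : c''.unop.obj ⟶ c'.unop.obj) ≫
        (u.unop.hom : c'.unop.obj ⟶ c.unop.obj)) ≫ f)
      = S.sMk ((v.unop.hom : c''.unop.obj ⟶ c'.unop.obj) ≫
        ((u.unop.hom : c'.unop.obj ⟶ c.unop.obj) ≫ f))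
    rw [Category.assoc]

/-- The natural transformation `B̄(-,X) ⟶ B̄(-,Y)` induced by `w : X ⟶ Y`. -/
noncomputable def sMap {X Y : B} (w : X ⟶ Y) : S.SRep CC X ⟶ S.SRep CC Y where
  app c := ModuleCat.ofHom (S.sComp c.unop.obj w)
  naturality {c c'} u := by
    ext x
    obtain ⟨f, rfl⟩ := Submodule.Quotient.mk_surjective _ x
    show S.sMk (((u.unop.hom : c'.unop.obj ⟶ c.unop.obj) ≫ f) ≫ w)
      = S.sMk ((u.unop.hom : c'.unop.obj ⟶ c.unop.obj) ≫ (f ≫ w))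
    rw [Category.assoc]

/-- A functor on `C` underlies a functor on the stable category `C̄` iff it kills
all maps factoring through a projective object of `B`. -/
def KillsProj (M : (ObjectProperty.FullSubcategory (· ∈ CC))ᵒᵖ ⥤ ModuleCat k) : Prop :=
  ∀ (c c' : (ObjectProperty.FullSubcategory (· ∈ CC))ᵒᵖ) (u : c ⟶ c'),
    (u.unop.hom : c'.unop.obj ⟶ c.unop.obj) ∈ S.projIdeal c'.unop.obj c.unop.obj → M.map u = 0

/-- `M` is a finitely presented k-linear contravariant functor on the stable
category `C̄`, i.e. an object of `mod-C̄`: it admits a projective presentation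
`B̄(-,C₁) → B̄(-,C₀) → M → 0` by (restricted) stable representables. -/
def IsFPStable (M : (ObjectProperty.FullSubcategory (· ∈ CC))ᵒᵖ ⥤ ModuleCat k) : Prop :=
  ∃ (C₁ C₀ : B), C₁ ∈ CC ∧ C₀ ∈ CC ∧
    ∃ (φ : S.SRep CC C₁ ⟶ S.SRep CC C₀) (ε : S.SRep CC C₀ ⟶ M),
      ∀ c, Function.Surjective (ε.app c) ∧ Function.Exact (φ.app c) (ε.app c)

/-- `M` is a finitely presented k-linear contravariant functor on `C`,
i.e. an object of `mod-C`. -/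
def IsFP (M : (ObjectProperty.FullSubcategory (· ∈ CC))ᵒᵖ ⥤ ModuleCat k) : Prop :=
  ∃ (C₁ C₀ : B), C₁ ∈ CC ∧ C₀ ∈ CC ∧
    ∃ (φ : LinRep (k := k) CC C₁ ⟶ LinRep CC C₀) (ε : LinRep (k := k) CC C₀ ⟶ M),
      ∀ c, Function.Surjective (ε.app c) ∧ Function.Exact (φ.app c) (ε.app c)

end FunctorCats

end FrobeniusSetup

/-!
Every failure of exactness of the stable sequence is witnessed by a map factoring through a
projective object `Q`. Such maps lift along `v`: `Q` lies in `C` and `M(Q) ≅ B̄(Q, X) = 0`, so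
exactness of the unstable presentation at `Q` applies. Injectivity at `Z ∈ C` needs in addition
`B̄(Ω⁻¹Z, C₀) = 0`, which is where `d ≥ 2`, `(d-1)`-orthogonality and `C̄[d] = C̄` enter.
-/

namespace FrobeniusSetup

variable {k : Type} [Field k] {B : Type u} [Category.{v} B] [Preadditive B]
  [CategoryTheory.Linear k B] [HasFiniteBiproducts B] [HasBinaryBiproducts B]
  (S : FrobeniusSetup k B)

section ProjIdeal

lemma proj_biprod {Q₁ Q₂ : B} (h₁ : S.Proj Q₁) (h₂ : S.Proj Q₂) : S.Proj (Q₁ ⊞ Q₂) := by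
  rw [S.proj_iff]
  intro X Y Z f g hses h
  obtain ⟨l₁, hl₁⟩ := (S.proj_iff Q₁).1 h₁ f g hses (biprod.inl ≫ h)
  obtain ⟨l₂, hl₂⟩ := (S.proj_iff Q₂).1 h₂ f g hses (biprod.inr ≫ h)
  exact ⟨biprod.desc l₁ l₂, by apply biprod.hom_ext' <;> simp [hl₁, hl₂]⟩

lemma mem_projIdeal_iff {A Y : B} (p : A ⟶ Y) :
    p ∈ S.projIdeal A Y ↔ ∃ (Q : B) (g : A ⟶ Q) (h : Q ⟶ Y), S.Proj Q ∧ p = g ≫ h := by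
  refine ⟨fun hp => ?_, fun hp => Submodule.subset_span hp⟩
  induction hp using Submodule.span_induction with
  | mem f hf => exact hf
  | zero => exact ⟨S.P A, 0, 0, S.projP A, by simp⟩
  | add f₁ f₂ _ _ h₁ h₂ =>
    obtain ⟨Q₁, g₁, h₁, hQ₁, rfl⟩ := h₁
    obtain ⟨Q₂, g₂, h₂, hQ₂, rfl⟩ := h₂
    exact ⟨Q₁ ⊞ Q₂, biprod.lift g₁ g₂, biprod.desc h₁ h₂, S.proj_biprod hQ₁ hQ₂, by simp⟩
  | smul a f _ hf =>
    obtain ⟨Q, g, h, hQ, rfl⟩ := hf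
    exact ⟨Q, a • g, h, hQ, by rw [Linear.smul_comp]⟩

lemma comp_mem_projIdeal_right {A Y Y' : B} {p : A ⟶ Y} (hp : p ∈ S.projIdeal A Y)
    (m : Y ⟶ Y') : p ≫ m ∈ S.projIdeal A Y' := by
  obtain ⟨Q, g, h, hQ, rfl⟩ := (S.mem_projIdeal_iff _).1 hp
  exact (S.mem_projIdeal_iff _).2 ⟨Q, g, h ≫ m, hQ, by rw [Category.assoc]⟩

lemma comp_mem_projIdeal_left {A' A Y : B} (m : A' ⟶ A) {p : A ⟶ Y}
    (hp : p ∈ S.projIdeal A Y) : m ≫ p ∈ S.projIdeal A' Y := by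
  obtain ⟨Q, g, h, hQ, rfl⟩ := (S.mem_projIdeal_iff _).1 hp
  exact (S.mem_projIdeal_iff _).2 ⟨Q, m ≫ g, h, hQ, by rw [Category.assoc]⟩

lemma sVanish_of_proj_left {A Y : B} (hA : S.Proj A) : S.sVanish A Y :=
  Submodule.eq_top_iff'.2 fun f =>
    (S.mem_projIdeal_iff f).2 ⟨A, 𝟙 A, f, hA, (Category.id_comp f).symm⟩

lemma sVanish_of_proj_right {A Y : B} (hY : S.Proj Y) : S.sVanish A Y :=
  Submodule.eq_top_iff'.2 fun f =>
    (S.mem_projIdeal_iff f).2 ⟨Y, f, 𝟙 Y, hY, (Category.comp_id f).symm⟩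

lemma mem_projIdeal_iff_factors_en {A Y : B} (p : A ⟶ Y) :
    p ∈ S.projIdeal A Y ↔ ∃ q : S.I A ⟶ Y, p = S.en A ≫ q := by
  constructor
  · intro hp
    obtain ⟨Q, g, h, hQ, rfl⟩ := (S.mem_projIdeal_iff _).1 hp
    obtain ⟨g', hg'⟩ := (S.inj_iff Q).1 hQ _ _ (S.ses_cosyz A) g
    exact ⟨g' ≫ h, by rw [← Category.assoc, hg']⟩
  · rintro ⟨q, rfl⟩
    exact (S.mem_projIdeal_iff _).2 ⟨S.I A, S.en A, q, S.projI A, rfl⟩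

lemma mem_projIdeal_iff_factors_pr {A Y : B} (p : A ⟶ Y) :
    p ∈ S.projIdeal A Y ↔ ∃ q : A ⟶ S.P Y, p = q ≫ S.pr Y := by
  constructor
  · intro hp
    obtain ⟨Q, g, h, hQ, rfl⟩ := (S.mem_projIdeal_iff _).1 hp
    obtain ⟨l, hl⟩ := (S.proj_iff Q).1 hQ _ _ (S.ses_syz Y) h
    exact ⟨g ≫ l, by rw [Category.assoc, hl]⟩
  · rintro ⟨q, rfl⟩
    exact (S.mem_projIdeal_iff _).2 ⟨S.P Y, q, S.pr Y, S.projP Y, rfl⟩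

lemma sVanish_of_stIso_right {A Y Y' : B} (hY : S.StIso Y Y') (h : S.sVanish A Y') :
    S.sVanish A Y := by
  obtain ⟨φ, ψ, hφψ, -⟩ := hY
  refine Submodule.eq_top_iff'.2 fun s => ?_
  have hs : s = (s ≫ φ) ≫ ψ - s ≫ (φ ≫ ψ - 𝟙 Y) := by
    rw [Preadditive.comp_sub, Category.comp_id, Category.assoc, sub_sub_cancel]
  rw [hs]
  exact sub_mem (S.comp_mem_projIdeal_right (h ▸ Submodule.mem_top) ψ)
    (S.comp_mem_projIdeal_left s hφψ)

end ProjIdeal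

section Shift

lemma cancel_epi_of_isSES {X Y Z W : B} {f : X ⟶ Y} {g : Y ⟶ Z} (hfg : S.IsSES f g)
    {x y : Z ⟶ W} (h : g ≫ x = g ≫ y) : x = y := by
  obtain ⟨_, _, huniq⟩ := S.ses_coker f g hfg (g ≫ x)
    (by rw [← Category.assoc, S.ses_zero f g hfg, zero_comp])
  rw [huniq x rfl, huniq y h.symm]

/-- `Ω` is faithful on the stable category. -/
lemma sVanish_of_sVanish_syz {A Y : B} (H : S.sVanish (S.syz A) (S.syz Y)) :
    S.sVanish A Y := by
  refine Submodule.eq_top_iff'.2 fun s => ?_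
  obtain ⟨l, hl⟩ := (S.proj_iff _).1 (S.projP A) _ _ (S.ses_syz Y) (S.pr A ≫ s)
  have h0 : (S.syzMono A ≫ l) ≫ S.pr Y = 0 := by
    rw [Category.assoc, hl, ← Category.assoc, S.ses_zero _ _ (S.ses_syz A), zero_comp]
  obtain ⟨s₁, hs₁, -⟩ := S.ses_ker _ _ (S.ses_syz Y) (S.syzMono A ≫ l) h0
  obtain ⟨Q, α, β, hQ, hfac⟩ := (S.mem_projIdeal_iff s₁).1 (H ▸ Submodule.mem_top)
  obtain ⟨α', hα'⟩ := (S.inj_iff Q).1 hQ _ _ (S.ses_syz A) α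
  have h1 : S.syzMono A ≫ (l - α' ≫ β ≫ S.syzMono Y) = 0 := by
    rw [Preadditive.comp_sub, ← Category.assoc, hα', ← Category.assoc, ← hfac, hs₁, sub_self]
  obtain ⟨n, hn, -⟩ := S.ses_coker _ _ (S.ses_syz A) _ h1
  have h2 : S.pr A ≫ (n ≫ S.pr Y) = S.pr A ≫ s := by
    rw [← Category.assoc, hn, Preadditive.sub_comp, hl, Category.assoc, Category.assoc,
      S.ses_zero _ _ (S.ses_syz Y), comp_zero, comp_zero, sub_zero]
  rw [← S.cancel_epi_of_isSES (S.ses_syz A) h2]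
  exact (S.mem_projIdeal_iff_factors_pr _).2 ⟨n, rfl⟩

lemma sVanish_of_sVanish_syz_iterate (n : ℕ) {A Y : B}
    (H : S.sVanish (S.syz^[n] A) (S.syz^[n] Y)) : S.sVanish A Y := by
  induction n generalizing A Y with
  | zero => exact H
  | succ m ih => exact S.sVanish_of_sVanish_syz (ih H)

/-- The adjunction-type isomorphism `B̄(Ω⁻¹Z, Y) ≅ B̄(Z, ΩY)`. -/
lemma sVanish_cosyz_of_sVanish_syz {Z Y : B} (H : S.sVanish Z (S.syz Y)) :
    S.sVanish (S.cosyz Z) Y := by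
  refine Submodule.eq_top_iff'.2 fun r => ?_
  obtain ⟨l, hl⟩ := (S.proj_iff _).1 (S.projI Z) _ _ (S.ses_syz Y) (S.cosyzEpi Z ≫ r)
  have h0 : (S.en Z ≫ l) ≫ S.pr Y = 0 := by
    rw [Category.assoc, hl, ← Category.assoc, S.ses_zero _ _ (S.ses_cosyz Z), zero_comp]
  obtain ⟨s, hs, -⟩ := S.ses_ker _ _ (S.ses_syz Y) (S.en Z ≫ l) h0
  obtain ⟨s', hs'⟩ := (S.mem_projIdeal_iff_factors_en _).1 (H ▸ Submodule.mem_top : s ∈ _)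
  have h1 : S.en Z ≫ (l - s' ≫ S.syzMono Y) = 0 := by
    rw [Preadditive.comp_sub, ← Category.assoc, ← hs', hs, sub_self]
  obtain ⟨n, hn, -⟩ := S.ses_coker _ _ (S.ses_cosyz Z) _ h1
  have h2 : S.cosyzEpi Z ≫ (n ≫ S.pr Y) = S.cosyzEpi Z ≫ r := by
    rw [← Category.assoc, hn, Preadditive.sub_comp, hl, Category.assoc,
      S.ses_zero _ _ (S.ses_syz Y), comp_zero, sub_zero]
  rw [← S.cancel_epi_of_isSES (S.ses_cosyz Z) h2]
  exact (S.mem_projIdeal_iff_factors_pr _).2 ⟨n, rfl⟩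

end Shift

section Orthogonal

variable {S} {C : Set B} {d : ℕ}

lemma MaxOrthogonal.proj_mem (hmax : S.MaxOrthogonal C d) {Q : B} (hQ : S.Proj Q) : Q ∈ C :=
  (hmax.2 Q).2 fun _ _ _ _ _ => S.sVanish_of_proj_right hQ

/-- `B̄(Ω⁻¹Z, C₀) ≅ B̄(Ω^{d-1}Z, Ω^d C₀)`, and `Ω^d C₀` is stably an object of `C`. -/
lemma MaxOrthogonal.sVanish_cosyz (hmax : S.MaxOrthogonal C d) (hd : 2 ≤ d)
    (hstab : S.ShiftStable C d) {Z C₀ : B} (hZ : Z ∈ C) (hC₀ : C₀ ∈ C) :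
    S.sVanish (S.cosyz Z) C₀ := by
  obtain ⟨m, rfl⟩ : ∃ m, d = m + 2 := ⟨d - 2, by omega⟩
  obtain ⟨C', hC', hiso⟩ := hstab C₀ hC₀
  refine S.sVanish_cosyz_of_sVanish_syz (S.sVanish_of_sVanish_syz_iterate (m + 1) ?_)
  exact S.sVanish_of_stIso_right hiso ((hmax.1 Z).1 hZ (m + 1) (by omega) (by omega) C' hC')

end Orthogonal

section Presentation

variable {S} {C : Set B} {M : (ObjectProperty.FullSubcategory (· ∈ C))ᵒᵖ ⥤ ModuleCat k}

lemma subsingleton_obj_of_iso_SRep {X : B} (e : M ≅ S.SRep C X)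
    {c : (ObjectProperty.FullSubcategory (· ∈ C))ᵒᵖ} (hc : S.Proj c.unop.obj) :
    Subsingleton (M.obj c) :=
  haveI : Subsingleton ((S.SRep C X).obj c) :=
    Submodule.Quotient.subsingleton_iff.2 (S.sVanish_of_proj_left hc)
  (e.app c).toLinearEquiv.injective.subsingleton

variable (hproj : ∀ Q, S.Proj Q → Q ∈ C)
  (hM : ∀ c : (ObjectProperty.FullSubcategory (· ∈ C))ᵒᵖ, S.Proj c.unop.obj →
    Subsingleton (M.obj c))
  {Y C₁ C₀ : B} {w : Y ⟶ C₁} {v : C₁ ⟶ C₀} {ε : LinRep (k := k) C C₀ ⟶ M}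
include hproj hM

lemma app_eq_zero_of_mem_projIdeal {c : (ObjectProperty.FullSubcategory (· ∈ C))ᵒᵖ}
    {p : c.unop.obj ⟶ C₀} (hp : p ∈ S.projIdeal c.unop.obj C₀) : ε.app c p = 0 := by
  obtain ⟨Q, g, h, hQ, rfl⟩ := (S.mem_projIdeal_iff _).1 hp
  let q : (ObjectProperty.FullSubcategory (· ∈ C))ᵒᵖ := Opposite.op ⟨Q, hproj Q hQ⟩
  have : Subsingleton (M.obj q) := hM q hQ
  let m : c.unop ⟶ q.unop := ObjectProperty.homMk g
  calc ε.app c (g ≫ h) = M.map m.op (ε.app q h) :=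
        ConcreteCategory.congr_hom (ε.naturality m.op) h
    _ = 0 := by rw [Subsingleton.elim (ε.app q h) 0, map_zero]

lemma exists_mem_projIdeal_comp_eq
    (hv : ∀ c, Function.Exact ((lMap (k := k) C v).app c) (ε.app c))
    {A : B} {y : A ⟶ C₀} (hy : y ∈ S.projIdeal A C₀) :
    ∃ x ∈ S.projIdeal A C₁, x ≫ v = y := by
  obtain ⟨Q, g, h, hQ, rfl⟩ := (S.mem_projIdeal_iff _).1 hy
  let q : (ObjectProperty.FullSubcategory (· ∈ C))ᵒᵖ := Opposite.op ⟨Q, hproj Q hQ⟩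
  have : Subsingleton (M.obj q) := hM q hQ
  obtain ⟨(h' : Q ⟶ C₁), hh'⟩ := (hv q h).1 (Subsingleton.elim _ _)
  refine ⟨g ≫ h', (S.mem_projIdeal_iff _).2 ⟨Q, g, h', hQ, rfl⟩, ?_⟩
  rw [Category.assoc, show h' ≫ v = h from hh']

lemma app_eq_zero_iff (hv : ∀ c, Function.Exact ((lMap (k := k) C v).app c) (ε.app c))
    (c : (ObjectProperty.FullSubcategory (· ∈ C))ᵒᵖ) (y : c.unop.obj ⟶ C₀) :
    ε.app c y = 0 ↔ ∃ x : c.unop.obj ⟶ C₁, y - x ≫ v ∈ S.projIdeal c.unop.obj C₀ := by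
  constructor
  · intro hy
    obtain ⟨x, hx⟩ := (hv c y).1 hy
    exact ⟨x, by rw [show x ≫ v = y from hx, sub_self]; exact zero_mem _⟩
  · rintro ⟨x, hx⟩
    have hsplit := map_add (ε.app c).hom (y - x ≫ v) (x ≫ v)
    rw [sub_add_cancel] at hsplit
    exact hsplit.trans ((congrArg₂ (· + ·) (app_eq_zero_of_mem_projIdeal hproj hM hx)
      ((hv c).apply_apply_eq_zero x)).trans (add_zero 0))

lemma sMap_exact (hw : ∀ c, Function.Exact ((lMap (k := k) C w).app c) ((lMap C v).app c))
    (hv : ∀ c, Function.Exact ((lMap (k := k) C v).app c) (ε.app c))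
    (c : (ObjectProperty.FullSubcategory (· ∈ C))ᵒᵖ) :
    Function.Exact ((S.sMap C w).app c) ((S.sMap C v).app c) := by
  intro y
  obtain ⟨x, rfl⟩ := Submodule.Quotient.mk_surjective _ y
  constructor
  · intro hxv
    obtain ⟨p, hp, hpv⟩ := exists_mem_projIdeal_comp_eq hproj hM hv
      ((Submodule.Quotient.mk_eq_zero _).1 hxv : x ≫ v ∈ _)
    obtain ⟨(z : c.unop.obj ⟶ Y), hz⟩ := (hw c (x - p)).1 (by
      change (x - p) ≫ v = 0
      rw [Preadditive.sub_comp, hpv, sub_self])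
    refine ⟨S.sMk z, (Submodule.Quotient.eq _).2 ?_⟩
    change z ≫ w - x ∈ _
    rw [show z ≫ w = x - p from hz, sub_sub_cancel_left]
    exact neg_mem hp
  · rintro ⟨z, hz⟩
    obtain ⟨z, rfl⟩ := Submodule.Quotient.mk_surjective _ z
    have hxz : x - z ≫ w ∈ S.projIdeal c.unop.obj C₁ := (Submodule.Quotient.eq _).1 hz.symm
    refine (Submodule.Quotient.mk_eq_zero _).2 ?_
    change x ≫ v ∈ _
    rw [← sub_add_cancel x (z ≫ w), Preadditive.add_comp,
      show (z ≫ w) ≫ v = 0 from (hw c).apply_apply_eq_zero z, add_zero]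
    exact S.comp_mem_projIdeal_right hxz v

/-- The stable defect of injectivity of `w_*` is a map `Ω⁻¹Z ⟶ C₀`, which vanishes stably. -/
lemma mem_projIdeal_of_comp_mem_projIdeal {c : (ObjectProperty.FullSubcategory (· ∈ C))ᵒᵖ}
    (hwinj : Function.Injective ((lMap (k := k) C w).app c))
    (hw : ∀ c, Function.Exact ((lMap (k := k) C w).app c) ((lMap C v).app c))
    (hv : ∀ c, Function.Exact ((lMap (k := k) C v).app c) (ε.app c))
    (hc : S.sVanish (S.cosyz c.unop.obj) C₀)
    {x : c.unop.obj ⟶ Y} (hx : x ≫ w ∈ S.projIdeal c.unop.obj C₁) :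
    x ∈ S.projIdeal c.unop.obj Y := by
  let i : (ObjectProperty.FullSubcategory (· ∈ C))ᵒᵖ := Opposite.op ⟨S.I c.unop.obj, hproj _ (S.projI c.unop.obj)⟩
  obtain ⟨u, hu⟩ := (S.mem_projIdeal_iff_factors_en _).1 hx
  have h0 : S.en c.unop.obj ≫ u ≫ v = 0 := by
    rw [← Category.assoc, ← hu]
    exact (hw c).apply_apply_eq_zero x
  obtain ⟨r, hr, -⟩ := S.ses_coker _ _ (S.ses_cosyz c.unop.obj) (u ≫ v) h0
  obtain ⟨p, -, hpv⟩ := exists_mem_projIdeal_comp_eq hproj hM hv (hc ▸ Submodule.mem_top : r ∈ _)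
  obtain ⟨(t : S.I c.unop.obj ⟶ Y), ht⟩ := (hw i (u - S.cosyzEpi c.unop.obj ≫ p)).1 (by
    change (u - S.cosyzEpi c.unop.obj ≫ p) ≫ v = 0
    rw [Preadditive.sub_comp, Category.assoc, hpv, hr, sub_self])
  have htx : (S.en c.unop.obj ≫ t) ≫ w = x ≫ w := by
    rw [Category.assoc, show t ≫ w = u - S.cosyzEpi c.unop.obj ≫ p from ht, Preadditive.comp_sub, ← hu,
      ← Category.assoc, S.ses_zero _ _ (S.ses_cosyz c.unop.obj), zero_comp, sub_zero]
  rw [← hwinj htx]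
  exact (S.mem_projIdeal_iff_factors_en _).2 ⟨t, rfl⟩

lemma sMap_injective {c : (ObjectProperty.FullSubcategory (· ∈ C))ᵒᵖ}
    (hwinj : Function.Injective ((lMap (k := k) C w).app c))
    (hw : ∀ c, Function.Exact ((lMap (k := k) C w).app c) ((lMap C v).app c))
    (hv : ∀ c, Function.Exact ((lMap (k := k) C v).app c) (ε.app c))
    (hc : S.sVanish (S.cosyz c.unop.obj) C₀) :
    Function.Injective ((S.sMap C w).app c) := by
  refine (injective_iff_map_eq_zero ((S.sMap C w).app c).hom).2 fun y hy => ?_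
  obtain ⟨x, rfl⟩ := Submodule.Quotient.mk_surjective _ y
  exact (Submodule.Quotient.mk_eq_zero _).2 <| mem_projIdeal_of_comp_mem_projIdeal hproj hM
    hwinj hw hv hc ((Submodule.Quotient.mk_eq_zero _).1 hy : x ≫ w ∈ _)

end Presentation

end FrobeniusSetup

open FrobeniusSetup in
theorem stmt5_induced_stable_presentation_exact_general
    {k : Type} [Field k] {B : Type u} [Category.{v} B] [Preadditive B]
    [CategoryTheory.Linear k B] [HasFiniteBiproducts B] [HasBinaryBiproducts B]
    (S : FrobeniusSetup k B) (d : ℕ) (hd : 2 ≤ d) (C : Set B)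
    (hmax : S.MaxOrthogonal C d)
    (hstab : S.ShiftStable C d)
    (M : (ObjectProperty.FullSubcategory (· ∈ C))ᵒᵖ ⥤ ModuleCat k)
    (X C₁ C₀ : B) (hC₀ : C₀ ∈ C)
    (hiso : Nonempty (M ≅ S.SRep C X))
    (w : S.syz X ⟶ C₁) (v : C₁ ⟶ C₀) (ε : LinRep (k := k) C C₀ ⟶ M)
    (hpres : ∀ c, Function.Injective ((lMap (k := k) C w).app c) ∧
      Function.Exact ((lMap (k := k) C w).app c) ((lMap (k := k) C v).app c) ∧
      Function.Exact ((lMap (k := k) C v).app c) (ε.app c) ∧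
      Function.Surjective (ε.app c)) :
    ∀ c : (ObjectProperty.FullSubcategory (· ∈ C))ᵒᵖ,
      Function.Injective ((S.sMap C w).app c) ∧
      Function.Exact ((S.sMap C w).app c) ((S.sMap C v).app c) ∧
      (∀ y : c.unop.obj ⟶ C₀, ε.app c y = 0 ↔
        ∃ x : c.unop.obj ⟶ C₁, y - x ≫ v ∈ S.projIdeal c.unop.obj C₀) ∧
      Function.Surjective (ε.app c) := by
  obtain ⟨e⟩ := hiso
  have hproj : ∀ Q, S.Proj Q → Q ∈ C := fun _ => hmax.proj_mem
  have hM : ∀ c, S.Proj c.unop.obj → Subsingleton (M.obj c) :=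
    fun _ => subsingleton_obj_of_iso_SRep e
  have hw := fun c => (hpres c).2.1
  have hv := fun c => (hpres c).2.2.1
  intro c
  exact ⟨sMap_injective hproj hM (hpres c).1 hw hv
      (hmax.sVanish_cosyz hd hstab c.unop.property hC₀),
    sMap_exact hproj hM hw hv c, app_eq_zero_iff hproj hM hv c, (hpres c).2.2.2⟩

open FrobeniusSetup in
/-- Proposition 2.4(2).  Given `M ∈ mod-C̄` together with a
projective presentation `0 → B(-,ΩX) → B(-,C₁) → B(-,C₀) → M → 0` in `mod-C`
as in Proposition 2.4(1), the induced sequence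
`0 → B̄(-,ΩX) → B̄(-,C₁) → B̄(-,C₀) → M → 0` of functors on `C̄` is exact,
i.e. it is a projective presentation of `M` in `mod-C̄`.  Exactness at the spot
`B̄(-,C₀)` is expressed representative-wise: `ε(y) = 0` iff `y` agrees with a
map coming from `C₁` up to a map factoring through a projective. -/
theorem stmt5_induced_stable_presentation_exact
    {k : Type} [Field k] {B : Type u} [Category.{v} B] [Preadditive B]
    [CategoryTheory.Linear k B] [HasFiniteBiproducts B] [HasBinaryBiproducts B]
    (S : FrobeniusSetup k B) (d : ℕ) (hd : 2 ≤ d) (C : Set B)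
    (hff : S.FunctoriallyFinite C) (hmax : S.MaxOrthogonal C d)
    (hstab : S.ShiftStable C d)
    (M : (ObjectProperty.FullSubcategory (· ∈ C))ᵒᵖ ⥤ ModuleCat k) (hM : S.IsFPStable C M)
    (X C₁ C₀ : B) (hC₁ : C₁ ∈ C) (hC₀ : C₀ ∈ C)
    (hiso : Nonempty (M ≅ S.SRep C X))
    (w : S.syz X ⟶ C₁) (v : C₁ ⟶ C₀) (ε : LinRep (k := k) C C₀ ⟶ M)
    (hpres : ∀ c, Function.Injective ((lMap (k := k) C w).app c) ∧
      Function.Exact ((lMap (k := k) C w).app c) ((lMap (k := k) C v).app c) ∧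
      Function.Exact ((lMap (k := k) C v).app c) (ε.app c) ∧
      Function.Surjective (ε.app c)) :
    ∀ c : (ObjectProperty.FullSubcategory (· ∈ C))ᵒᵖ,
      Function.Injective ((S.sMap C w).app c) ∧
      Function.Exact ((S.sMap C w).app c) ((S.sMap C v).app c) ∧
      (∀ y : c.unop.obj ⟶ C₀, ε.app c y = 0 ↔
        ∃ x : c.unop.obj ⟶ C₁, y - x ≫ v ∈ S.projIdeal c.unop.obj C₀) ∧
      Function.Surjective (ε.app c) :=
  stmt5_induced_stable_presentation_exact_general S d hd C hmax hstab M X C₁ C₀ hC₀ hiso w v ε hpres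
end
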